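/- Let N be a finite set of items partitioned into m parts, each of which is packable into the bin of width W and height H, and let w̃, h̃ : N → ℝ≥0 be conservative scales for N. Then m >= (Σ_{j∈N} w̃_j · h̃_j)/(W·H). In particular, the ceiling of Σ_{j∈N} w̃_j h̃_j/(W·H) is a valid lower bound on the optimal number of bins of the two-dimensional bin packing problem. -/

import Mathlib

/-- A packing of the finite set `S` of items into a bin of width `W` and height `H`:
coordinates `x y` place each item inside the bin and the open rectangles of distinct
items are disjoint. -/
def IsPacking {ι : Type*} (w h : ι → ℝ) (W H : ℝ) (S : Finset ι) (x y : ι → ℝ) : Prop :=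
  (∀ j ∈ S, 0 ≤ x j ∧ x j + w j ≤ W ∧ 0 ≤ y j ∧ y j + h j ≤ H) ∧
  ∀ i ∈ S, ∀ j ∈ S, i ≠ j →
    Disjoint (Set.Ioo (x i) (x i + w i) ×ˢ Set.Ioo (y i) (y i + h i))
             (Set.Ioo (x j) (x j + w j) ×ˢ Set.Ioo (y j) (y j + h j))

/-- `S` is packable into the bin of width `W` and height `H`. -/
def Packable {ι : Type*} (w h : ι → ℝ) (W H : ℝ) (S : Finset ι) : Prop :=
  ∃ x y : ι → ℝ, IsPacking w h W H S x y

/-!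
Shift every item of a packing down to the largest total scaled height `h̃` of a stack of
items (pairwise disjoint height intervals) lying entirely below it. Items whose width
intervals overlap keep their vertical order, so the result is a packing with heights `h̃`;
it stays inside the bin because such a stack, together with the item, has total height at
most `H`, and conservativity turns this into the bound for `h̃`. Doing the same horizontally
gives a packing of every bin with the scaled sizes, whose total area is at most `W * H`.
-/

open Set MeasureTheory

lemma Ioo_disjoint_Ioo_of_le {α : Type*} [Preorder α] {a b c d : α} (h : b ≤ c) :
    Disjoint (Ioo a b) (Ioo c d) :=
  (Iio_disjoint_Ici h).mono Ioo_subset_Iio_self (Ioo_subset_Ioi_self.trans Ioi_subset_Ici_self)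

lemma le_or_le_of_disjoint_Ioo {α : Type*} [LinearOrder α] [DenselyOrdered α] {a b c d : α}
    (hab : a < b) (hcd : c < d) (h : Disjoint (Ioo a b) (Ioo c d)) : b ≤ c ∨ d ≤ a := by
  rw [Ioo_disjoint_Ioo, min_le_iff, le_max_iff, le_max_iff] at h
  rcases h with (h | h) | (h | h)
  · exact absurd hab h.not_gt
  · exact Or.inl h
  · exact Or.inr h
  · exact absurd hcd h.not_gt

lemma sum_measureReal_le_of_pairwiseDisjoint {α ι : Type*} [MeasurableSpace α] {μ : Measure α}
    {s : Finset ι} {f : ι → Set α} {K : Set α} (hd : (s : Set ι).PairwiseDisjoint f)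
    (hm : ∀ j ∈ s, MeasurableSet (f j)) (hK : ∀ j ∈ s, f j ⊆ K) (hKfin : μ K ≠ ⊤) :
    ∑ j ∈ s, μ.real (f j) ≤ μ.real K := by
  rw [← measureReal_biUnion_finset hd hm fun j hj => measure_ne_top_of_subset (hK j hj) hKfin]
  exact measureReal_mono (iUnion₂_subset hK) hKfin

section Stacks

variable {ι : Type*} (y v v' : ι → ℝ)

def IsStackBelow (t : ℝ) (C : Finset ι) : Prop :=
  (∀ k ∈ C, y k + v k ≤ t) ∧ (C : Set ι).PairwiseDisjoint fun k => Ioo (y k) (y k + v k)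

variable {y v}

lemma isStackBelow_empty (t : ℝ) : IsStackBelow y v t ∅ :=
  ⟨by simp, by simp⟩

lemma IsStackBelow.insert [DecidableEq ι] {t : ℝ} {C : Finset ι} {i : ι}
    (hC : IsStackBelow y v (y i) C) (hvi : 0 ≤ v i) (hit : y i + v i ≤ t) :
    IsStackBelow y v t (insert i C) := by
  refine ⟨fun k hk => ?_, ?_⟩
  · rcases Finset.mem_insert.mp hk with rfl | hk
    · exact hit
    · linarith [hC.1 k hk]
  · rw [Finset.coe_insert]
    exact hC.2.insert fun k hk _ => (Ioo_disjoint_Ioo_of_le (hC.1 k hk)).symm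

lemma IsStackBelow.sum_le {t : ℝ} {C : Finset ι} (hC : IsStackBelow y v t C) (ht : 0 ≤ t)
    (hy : ∀ k ∈ C, 0 ≤ y k) (hv : ∀ k ∈ C, 0 ≤ v k) : ∑ k ∈ C, v k ≤ t := by
  have hlen : ∀ k ∈ C, volume.real (Ioo (y k) (y k + v k)) = v k := fun k hk => by
    rw [Real.volume_real_Ioo_of_le (by linarith [hv k hk]), add_sub_cancel_left]
  have hsub : ∀ k ∈ C, Ioo (y k) (y k + v k) ⊆ Icc 0 t := fun k hk =>
    Ioo_subset_Icc_self.trans (Icc_subset_Icc (hy k hk) (hC.1 k hk))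
  calc ∑ k ∈ C, v k = ∑ k ∈ C, volume.real (Ioo (y k) (y k + v k)) :=
        (Finset.sum_congr rfl hlen).symm
    _ ≤ volume.real (Icc 0 t) :=
        sum_measureReal_le_of_pairwiseDisjoint hC.2 (fun _ _ => measurableSet_Ioo) hsub
          measure_Icc_lt_top.ne
    _ = t := by rw [Real.volume_real_Icc_of_le ht, sub_zero]

variable (y v)

open Classical in
noncomputable def stackHeight (S : Finset ι) (t : ℝ) : ℝ :=
  (S.powerset.filter (IsStackBelow y v t)).sup'
    ⟨∅, Finset.mem_filter.mpr ⟨Finset.empty_mem_powerset S, isStackBelow_empty t⟩⟩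
    fun C => ∑ k ∈ C, v' k

variable {y v v'} {S : Finset ι}

lemma le_stackHeight {t : ℝ} {C : Finset ι} (hCS : C ⊆ S) (hC : IsStackBelow y v t C) :
    ∑ k ∈ C, v' k ≤ stackHeight y v v' S t := by
  classical
  exact Finset.le_sup' (fun C => ∑ k ∈ C, v' k)
    (Finset.mem_filter.mpr ⟨Finset.mem_powerset.mpr hCS, hC⟩)

lemma stackHeight_nonneg (t : ℝ) : 0 ≤ stackHeight y v v' S t := by
  simpa using le_stackHeight (v' := v') (Finset.empty_subset S) (isStackBelow_empty t)

lemma exists_stack_sum_eq_stackHeight (t : ℝ) :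
    ∃ C ⊆ S, IsStackBelow y v t C ∧ ∑ k ∈ C, v' k = stackHeight y v v' S t := by
  classical
  obtain ⟨C, hC, hmax⟩ := Finset.exists_mem_eq_sup'
    (s := S.powerset.filter (IsStackBelow y v t)) ⟨∅, by simpa using isStackBelow_empty t⟩
    fun C => ∑ k ∈ C, v' k
  obtain ⟨hCS, hCt⟩ := Finset.mem_filter.mp hC
  exact ⟨C, Finset.mem_powerset.mp hCS, hCt, by rw [stackHeight, hmax]⟩

lemma notMem_of_isStackBelow {C : Finset ι} {i : ι} (hC : IsStackBelow y v (y i) C)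
    (hvi : 0 < v i) : i ∉ C := fun hi => by
  linarith [hC.1 i hi]

lemma stackHeight_add_le {i : ι} {t : ℝ} (hi : i ∈ S) (hvi : 0 < v i) (hit : y i + v i ≤ t) :
    stackHeight y v v' S (y i) + v' i ≤ stackHeight y v v' S t := by
  classical
  obtain ⟨C, hCS, hC, hsum⟩ := exists_stack_sum_eq_stackHeight (S := S) (v' := v') (y i)
  have hstack := le_stackHeight (v' := v') (Finset.insert_subset hi hCS) (hC.insert hvi.le hit)
  rw [Finset.sum_insert (notMem_of_isStackBelow hC hvi), hsum] at hstack
  linarith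

end Stacks

section Packing

variable {ι : Type*} {w h : ι → ℝ} {W H : ℝ} {S : Finset ι}

lemma IsPacking.swap {x y : ι → ℝ} (hp : IsPacking w h W H S x y) :
    IsPacking h w H W S y x := by
  obtain ⟨hin, hdisj⟩ := hp
  refine ⟨fun j hj => ?_, fun i hi j hj hij => ?_⟩
  · obtain ⟨h1, h2, h3, h4⟩ := hin j hj
    exact ⟨h3, h4, h1, h2⟩
  · exact disjoint_prod.mpr (disjoint_prod.mp (hdisj i hi j hj hij)).symm

lemma Packable.swap (hp : Packable w h W H S) : Packable h w H W S :=
  let ⟨x, y, hxy⟩ := hp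
  ⟨y, x, hxy.swap⟩

lemma Packable.of_conservative_height {h' : ι → ℝ} (hh : ∀ j ∈ S, 0 < h j)
    (hcs : ∀ C ⊆ S, ∑ j ∈ C, h j ≤ H → ∑ j ∈ C, h' j ≤ H) (hp : Packable w h W H S) :
    Packable w h' W H S := by
  classical
  obtain ⟨x, y, hin, hdisj⟩ := hp
  have hy : ∀ j ∈ S, 0 ≤ y j := fun j hj => (hin j hj).2.2.1
  refine ⟨x, fun j => stackHeight y h h' S (y j), fun j hj => ?_, fun i hi j hj hij => ?_⟩
  · obtain ⟨hx0, hxW, hy0, hyH⟩ := hin j hj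
    refine ⟨hx0, hxW, stackHeight_nonneg _, ?_⟩
    obtain ⟨C, hCS, hC, hsum⟩ := exists_stack_sum_eq_stackHeight (S := S) (v' := h') (y j)
    have hjC := notMem_of_isStackBelow hC (hh j hj)
    have hCh := hC.sum_le hy0 (fun k hk => hy k (hCS hk)) fun k hk => (hh k (hCS hk)).le
    have hbound := hcs (insert j C) (Finset.insert_subset hj hCS) (by
      rw [Finset.sum_insert hjC]
      linarith)
    rw [Finset.sum_insert hjC, hsum] at hbound
    linarith
  · rcases disjoint_prod.mp (hdisj i hi j hj hij) with hx | hyij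
    · exact disjoint_prod.mpr (Or.inl hx)
    refine disjoint_prod.mpr (Or.inr ?_)
    have hhi := hh i hi
    have hhj := hh j hj
    rcases le_or_le_of_disjoint_Ioo (by linarith) (by linarith) hyij with hle | hle
    · exact Ioo_disjoint_Ioo_of_le (stackHeight_add_le hi hhi hle)
    · exact (Ioo_disjoint_Ioo_of_le (stackHeight_add_le hj hhj hle)).symm

lemma Packable.of_conservative_width {w' : ι → ℝ} (hw : ∀ j ∈ S, 0 < w j)
    (hcs : ∀ C ⊆ S, ∑ j ∈ C, w j ≤ W → ∑ j ∈ C, w' j ≤ W) (hp : Packable w h W H S) :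
    Packable w' h W H S :=
  (hp.swap.of_conservative_height hw hcs).swap

lemma Packable.sum_mul_le (hp : Packable w h W H S) (hw : ∀ j ∈ S, 0 ≤ w j)
    (hh : ∀ j ∈ S, 0 ≤ h j) (hW : 0 ≤ W) (hH : 0 ≤ H) : ∑ j ∈ S, w j * h j ≤ W * H := by
  obtain ⟨x, y, hin, hdisj⟩ := hp
  have harea : ∀ j ∈ S,
      volume.real (Ioo (x j) (x j + w j) ×ˢ Ioo (y j) (y j + h j)) = w j * h j := fun j hj => by
    rw [Measure.volume_eq_prod, measureReal_prod_prod, Real.volume_real_Ioo_of_le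
      (by linarith [hw j hj]), Real.volume_real_Ioo_of_le (by linarith [hh j hj]),
      add_sub_cancel_left, add_sub_cancel_left]
  have hsub : ∀ j ∈ S, Ioo (x j) (x j + w j) ×ˢ Ioo (y j) (y j + h j) ⊆ Icc 0 W ×ˢ Icc 0 H :=
    fun j hj => by
      obtain ⟨h1, h2, h3, h4⟩ := hin j hj
      exact prod_mono (Ioo_subset_Icc_self.trans (Icc_subset_Icc h1 h2))
        (Ioo_subset_Icc_self.trans (Icc_subset_Icc h3 h4))
  calc ∑ j ∈ S, w j * h j
      = ∑ j ∈ S, volume.real (Ioo (x j) (x j + w j) ×ˢ Ioo (y j) (y j + h j)) :=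
        (Finset.sum_congr rfl harea).symm
    _ ≤ volume.real (Icc (0 : ℝ) W ×ˢ Icc (0 : ℝ) H) :=
        sum_measureReal_le_of_pairwiseDisjoint (fun i hi j hj hij => hdisj i hi j hj hij)
          (fun _ _ => measurableSet_Ioo.prod measurableSet_Ioo) hsub
          (isCompact_Icc.prod isCompact_Icc).measure_lt_top.ne
    _ = W * H := by
        rw [Measure.volume_eq_prod, measureReal_prod_prod, Real.volume_real_Icc_of_le hW,
          Real.volume_real_Icc_of_le hH, sub_zero, sub_zero]

end Packing

theorem stmt_11_general {ι : Type*} (w h : ι → ℝ) (W H : ℝ)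
    (hW : 0 < W) (hH : 0 < H) (hw : ∀ j, 0 < w j) (hh : ∀ j, 0 < h j)
    (N : Finset ι)
    (w' h' : ι → ℝ) (hw' : ∀ j ∈ N, 0 ≤ w' j) (hh' : ∀ j ∈ N, 0 ≤ h' j)
    (hcsW : ∀ S ⊆ N, ∑ j ∈ S, w j ≤ W → ∑ j ∈ S, w' j ≤ W)
    (hcsH : ∀ S ⊆ N, ∑ j ∈ S, h j ≤ H → ∑ j ∈ S, h' j ≤ H)
    (m : ℕ) (P : Finset (Finset ι)) (hm : P.card = m)
    (hdisj : ∀ S ∈ P, ∀ T ∈ P, S ≠ T → Disjoint S T)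
    (hsub : ∀ S ∈ P, S ⊆ N)
    (hcover : ∀ j ∈ N, ∃ S ∈ P, j ∈ S)
    (hpack : ∀ S ∈ P, Packable w h W H S) :
    (∑ j ∈ N, w' j * h' j) / (W * H) ≤ (m : ℝ) ∧
    ⌈(∑ j ∈ N, w' j * h' j) / (W * H)⌉ ≤ (m : ℤ) := by
  have hbin : ∀ S ∈ P, ∑ j ∈ S, w' j * h' j ≤ W * H := fun S hS => by
    have hSN := hsub S hS
    have hscaled : Packable w' h' W H S :=
      ((hpack S hS).of_conservative_width (fun j _ => hw j) fun C hC => hcsW C (hC.trans hSN))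
        |>.of_conservative_height (fun j _ => hh j) fun C hC => hcsH C (hC.trans hSN)
    exact hscaled.sum_mul_le (fun j hj => hw' j (hSN hj)) (fun j hj => hh' j (hSN hj)) hW.le hH.le
  have hPD : (P : Set (Finset ι)).PairwiseDisjoint id := fun S hS T hT hST => hdisj S hS T hT hST
  have hpart : N = P.disjiUnion id hPD := by
    ext j
    rw [Finset.mem_disjiUnion]
    exact ⟨hcover j, fun ⟨S, hS, hj⟩ => hsub S hS hj⟩
  have htotal : ∑ j ∈ N, w' j * h' j ≤ m * (W * H) :=
    calc ∑ j ∈ N, w' j * h' j = ∑ S ∈ P, ∑ j ∈ S, w' j * h' j := by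
          rw [hpart, Finset.sum_disjiUnion]; rfl
      _ ≤ ∑ _S ∈ P, W * H := Finset.sum_le_sum hbin
      _ = m * (W * H) := by rw [Finset.sum_const, nsmul_eq_mul, hm]
  have hratio := (div_le_iff₀ (mul_pos hW hH)).mpr htotal
  exact ⟨hratio, Int.ceil_le.mpr (by exact_mod_cast hratio)⟩

theorem stmt_11 {ι : Type*} [DecidableEq ι] (w h : ι → ℝ) (W H : ℝ)
    (hW : 0 < W) (hH : 0 < H) (hw : ∀ j, 0 < w j) (hh : ∀ j, 0 < h j)
    (N : Finset ι)
    (w' h' : ι → ℝ) (hw' : ∀ j ∈ N, 0 ≤ w' j) (hh' : ∀ j ∈ N, 0 ≤ h' j)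
    (hcsW : ∀ S ⊆ N, ∑ j ∈ S, w j ≤ W → ∑ j ∈ S, w' j ≤ W)
    (hcsH : ∀ S ⊆ N, ∑ j ∈ S, h j ≤ H → ∑ j ∈ S, h' j ≤ H)
    (m : ℕ) (P : Finset (Finset ι)) (hm : P.card = m)
    (hdisj : ∀ S ∈ P, ∀ T ∈ P, S ≠ T → Disjoint S T)
    (hsub : ∀ S ∈ P, S ⊆ N)
    (hcover : ∀ j ∈ N, ∃ S ∈ P, j ∈ S)
    (hpack : ∀ S ∈ P, Packable w h W H S) :
    (∑ j ∈ N, w' j * h' j) / (W * H) ≤ (m : ℝ) ∧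
    ⌈(∑ j ∈ N, w' j * h' j) / (W * H)⌉ ≤ (m : ℤ) :=
  stmt_11_general w h W H hW hH hw hh N w' h' hw' hh' hcsW hcsH m P hm hdisj hsub hcover hpack
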